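/- The first moment of the fractional Poisson measure π_{λ,β} is λ/Γ(β+1), and the second moment is λ/Γ(β+1) + 2λ²/Γ(2β+1). -/

import Mathlib

/-!
Write `π_k = λᵏ/k! · E⁽ᵏ⁾(-λ)` with `E = E_β`. The factorial moments are
`∑ k(k-1)⋯(k-d+1) π_k = λᵈ E⁽ᵈ⁾(0) = λᵈ d!/Γ(βd+1)`: shifting the index by `d` turns the sum into
`λᵈ` times the Taylor expansion of the entire function `E⁽ᵈ⁾` about `-λ`, evaluated at `0`.
The first two moments follow from `k = k⁽¹⁾` and `k² = k⁽²⁾ + k⁽¹⁾`.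
`E_β` is entire by the ratio test, since `Γ(x)/Γ(x+β) → 0` by log-convexity of `Γ`.
-/

/-- The Mittag-Leffler function `E_β(z) = ∑ zⁿ / Γ(βn+1)`. -/
noncomputable def mittagLeffler (β : ℝ) (z : ℂ) : ℂ :=
  ∑' n : ℕ, z ^ n / Complex.Gamma ((β * n + 1 : ℝ) : ℂ)

open Filter Topology Nat

namespace Real

/-- Log-convexity of `Γ`: the slope of `log Γ` on `[x - 1, x]`, which is `log (x - 1)`, is at most
its slope on `[x, x + β]`. -/
theorem Gamma_mul_rpow_le_Gamma_add {x β : ℝ} (hx : 1 < x) (hβ : 0 < β) :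
    Gamma x * (x - 1) ^ β ≤ Gamma (x + β) := by
  have hx1 : 0 < x - 1 := by linarith
  have hΓx : 0 < Gamma x := Gamma_pos_of_pos (by linarith)
  have hΓxβ : 0 < Gamma (x + β) := Gamma_pos_of_pos (by linarith)
  have hslope := convexOn_log_Gamma.slope_mono_adjacent (Set.mem_Ioi.mpr hx1)
    (Set.mem_Ioi.mpr (by linarith : 0 < x + β)) (by linarith : x - 1 < x) (by linarith : x < x + β)
  have hrec : Gamma x = (x - 1) * Gamma (x - 1) := by
    simpa using Gamma_add_one hx1.ne'
  have hΓx1 : 0 < Gamma (x - 1) := Gamma_pos_of_pos hx1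
  have hleft : (log (Gamma x) - log (Gamma (x - 1))) / (x - (x - 1)) = log (x - 1) := by
    rw [hrec, log_mul hx1.ne' hΓx1.ne']
    ring
  simp only [Function.comp_apply, hleft, add_sub_cancel_left, le_div_iff₀ hβ] at hslope
  rw [← log_le_log_iff (by positivity) hΓxβ, log_mul hΓx.ne' (by positivity), log_rpow hx1]
  linarith

theorem tendsto_Gamma_div_Gamma_add_atTop {β : ℝ} (hβ : 0 < β) :
    Tendsto (fun x => Gamma x / Gamma (x + β)) atTop (𝓝 0) := by
  have hlim : Tendsto (fun x : ℝ => (x - 1) ^ (-β)) atTop (𝓝 0) := by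
    simpa only [Function.comp_def, id, ← sub_eq_add_neg] using
      (tendsto_rpow_neg_atTop hβ).comp (tendsto_atTop_add_const_right _ (-1) tendsto_id)
  refine squeeze_zero' ?_ ?_ hlim
  · filter_upwards [eventually_gt_atTop 0] with x hx
    exact div_nonneg (Gamma_pos_of_pos hx).le (Gamma_pos_of_pos (by linarith)).le
  · filter_upwards [eventually_gt_atTop 1] with x hx
    have hx1 : 0 < x - 1 := by linarith
    rw [div_le_iff₀ (Gamma_pos_of_pos (by linarith)), rpow_neg hx1.le, inv_mul_eq_div,
      le_div_iff₀ (by positivity)]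
    exact Gamma_mul_rpow_le_Gamma_add hx hβ

end Real

noncomputable def mittagLefflerCoeff (β : ℝ) (n : ℕ) : ℂ :=
  (Complex.Gamma ((β * n + 1 : ℝ) : ℂ))⁻¹

noncomputable def mittagLefflerSeries (β : ℝ) : FormalMultilinearSeries ℂ ℂ ℂ :=
  FormalMultilinearSeries.ofScalars ℂ (mittagLefflerCoeff β)

section MittagLeffler

variable {β : ℝ}

theorem norm_mittagLefflerCoeff (hβ : 0 < β) (n : ℕ) :
    ‖mittagLefflerCoeff β n‖ = (Real.Gamma (β * n + 1))⁻¹ := by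
  rw [mittagLefflerCoeff, Complex.Gamma_ofReal, norm_inv, Complex.norm_real, Real.norm_eq_abs,
    abs_of_pos (Real.Gamma_pos_of_pos (by positivity))]

theorem mittagLefflerSeries_radius (hβ : 0 < β) : (mittagLefflerSeries β).radius = ⊤ := by
  refine FormalMultilinearSeries.ofScalars_radius_eq_top_of_tendsto _ _
    (Eventually.of_forall fun n => ?_) ?_
  · rw [← norm_ne_zero_iff, norm_mittagLefflerCoeff hβ]
    exact (inv_pos.mpr (Real.Gamma_pos_of_pos (by positivity))).ne'
  · have hlin : Tendsto (fun n : ℕ => β * n + 1) atTop atTop :=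
      tendsto_atTop_add_const_right _ 1 (tendsto_natCast_atTop_atTop.const_mul_atTop hβ)
    refine ((Real.tendsto_Gamma_div_Gamma_add_atTop hβ).comp hlin).congr fun n => ?_
    simp only [Function.comp_apply, norm_mittagLefflerCoeff hβ, Nat.cast_succ]
    rw [inv_div_inv]
    ring_nf

theorem hasFPowerSeriesOnBall_mittagLeffler (hβ : 0 < β) :
    HasFPowerSeriesOnBall (mittagLeffler β) (mittagLefflerSeries β) 0 ⊤ := by
  have h := (mittagLefflerSeries β).hasFPowerSeriesOnBall (by simp [mittagLefflerSeries_radius hβ])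
  rw [mittagLefflerSeries_radius hβ] at h
  convert h using 1
  funext z
  rw [mittagLeffler, mittagLefflerSeries, ← FormalMultilinearSeries.ofScalarsSum,
    FormalMultilinearSeries.ofScalars_sum_eq]
  simp only [mittagLefflerCoeff, smul_eq_mul, div_eq_inv_mul]

theorem differentiable_mittagLeffler (hβ : 0 < β) : Differentiable ℂ (mittagLeffler β) := by
  simpa [← differentiableOn_univ] using (hasFPowerSeriesOnBall_mittagLeffler hβ).differentiableOn

theorem iteratedDeriv_mittagLeffler_zero (hβ : 0 < β) (n : ℕ) :
    iteratedDeriv n (mittagLeffler β) 0 = n ! / Complex.Gamma ((β * n + 1 : ℝ) : ℂ) := by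
  rw [iteratedDeriv_eq_iteratedFDeriv,
    ← (hasFPowerSeriesOnBall_mittagLeffler hβ).factorial_smul, mittagLefflerSeries,
    FormalMultilinearSeries.ofScalars_apply_eq, mittagLefflerCoeff]
  simp [div_eq_mul_inv]

end MittagLeffler

theorem iteratedDeriv_iteratedDeriv {𝕜 F : Type*} [NontriviallyNormedField 𝕜]
    [NormedAddCommGroup F] [NormedSpace 𝕜 F] (f : 𝕜 → F) (m n : ℕ) :
    iteratedDeriv m (iteratedDeriv n f) = iteratedDeriv (m + n) f := by
  simp only [iteratedDeriv_eq_iterate, Function.iterate_add_apply]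

theorem Complex.hasSum_descFactorial_mul_taylorSeries_of_entire {f : ℂ → ℂ}
    (hf : Differentiable ℂ f) (d : ℕ) (c h : ℂ) :
    HasSum (fun k : ℕ => (k.descFactorial d : ℂ) * (h ^ k / k ! * iteratedDeriv k f c))
      (h ^ d * iteratedDeriv d f (c + h)) := by
  have hg : Differentiable ℂ (iteratedDeriv d f) :=
    hf.contDiff.differentiable_iteratedDeriv d (WithTop.coe_lt_top _)
  have htaylor := (Complex.hasSum_taylorSeries_of_entire hg c (c + h)).mul_left (h ^ d)
  have hlow : ∑ k ∈ Finset.range d,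
      (k.descFactorial d : ℂ) * (h ^ k / k ! * iteratedDeriv k f c) = 0 :=
    Finset.sum_eq_zero fun k hk => by
      rw [Nat.descFactorial_eq_zero_iff_lt.mpr (Finset.mem_range.mp hk), Nat.cast_zero, zero_mul]
  refine (hasSum_nat_add_iff' d).mp ?_
  rw [hlow, sub_zero]
  refine htaylor.congr_fun fun j => ?_
  have hfact : ((j + d) ! : ℂ) = j ! * (j + d).descFactorial d := by
    have := Nat.factorial_mul_descFactorial (Nat.le_add_left d j)
    rw [Nat.add_sub_cancel] at this
    exact_mod_cast this.symm
  rw [hfact, add_sub_cancel_left, ← iteratedDeriv_iteratedDeriv, smul_eq_mul, smul_eq_mul, pow_add]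
  have : ((j + d).descFactorial d : ℂ) ≠ 0 := by
    exact_mod_cast (Nat.descFactorial_pos.mpr (Nat.le_add_left d j)).ne'
  field_simp

theorem hasSum_descFactorial_mul_fracPoisson {β : ℝ} (hβ : 0 < β) (z : ℂ) (d : ℕ) :
    HasSum (fun k : ℕ => (k.descFactorial d : ℂ) *
        (z ^ k / k ! * iteratedDeriv k (mittagLeffler β) (-z)))
      (z ^ d * d ! / Complex.Gamma ((β * d + 1 : ℝ) : ℂ)) := by
  simpa [iteratedDeriv_mittagLeffler_zero hβ, mul_div_assoc] using
    Complex.hasSum_descFactorial_mul_taylorSeries_of_entire (differentiable_mittagLeffler hβ) d (-z) z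

theorem fracPoisson_first_two_moments_general (β lam : ℝ) (hβ : 0 < β) :
    (∑' k : ℕ, (k : ℂ) *
        ((lam : ℂ) ^ k / ((k).factorial : ℂ) * iteratedDeriv k (mittagLeffler β) (-(lam : ℂ)))
      = (lam : ℂ) / Complex.Gamma ((β + 1 : ℝ) : ℂ)) ∧
    (∑' k : ℕ, (k : ℂ) ^ 2 *
        ((lam : ℂ) ^ k / ((k).factorial : ℂ) * iteratedDeriv k (mittagLeffler β) (-(lam : ℂ)))
      = (lam : ℂ) / Complex.Gamma ((β + 1 : ℝ) : ℂ)
        + 2 * (lam : ℂ) ^ 2 / Complex.Gamma ((2 * β + 1 : ℝ) : ℂ)) := by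
  have h1 := hasSum_descFactorial_mul_fracPoisson hβ lam 1
  have h2 := hasSum_descFactorial_mul_fracPoisson hβ lam 2
  simp only [Nat.descFactorial_one, Nat.cast_one, mul_one, Nat.factorial_one, pow_one] at h1
  refine ⟨h1.tsum_eq, ?_⟩
  have hsq (k : ℕ) : (k : ℂ) ^ 2 = (k.descFactorial 2 : ℂ) + k := by
    cases k with
    | zero => simp
    | succ k => simp [Nat.descFactorial_succ]; ring
  simp only [hsq, add_mul]
  rw [(h2.add h1).tsum_eq, add_comm, mul_comm (2 : ℝ) β]
  norm_num [mul_comm]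

/-- First and second moments of the fractional Poisson measure:
`m(1) = λ/Γ(β+1)` and `m(2) = λ/Γ(β+1) + 2λ²/Γ(2β+1)`. -/
theorem fracPoisson_first_two_moments (β lam : ℝ) (hβ : 0 < β) (hβ1 : β ≤ 1) (hlam : 0 < lam) :
    (∑' k : ℕ, (k : ℂ) *
        ((lam : ℂ) ^ k / ((k).factorial : ℂ) * iteratedDeriv k (mittagLeffler β) (-(lam : ℂ)))
      = (lam : ℂ) / Complex.Gamma ((β + 1 : ℝ) : ℂ)) ∧
    (∑' k : ℕ, (k : ℂ) ^ 2 *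
        ((lam : ℂ) ^ k / ((k).factorial : ℂ) * iteratedDeriv k (mittagLeffler β) (-(lam : ℂ)))
      = (lam : ℂ) / Complex.Gamma ((β + 1 : ℝ) : ℂ)
        + 2 * (lam : ℂ) ^ 2 / Complex.Gamma ((2 * β + 1 : ℝ) : ℂ)) :=
  fracPoisson_first_two_moments_general β lam hβ
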